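/- arXiv:math/0512146 — 6 statements merged into one kernel-verified Lean document; each statement's English description precedes it below -/
import Mathlib

section
/- For each integer k ≥ 0 there exists a constant C_k, depending only on k and on the moments of the common distribution p, such that for every even N ≥ 2 the average (2k+1)-st spectral moment satisfies |N^{−((2k+1)/2+1)} · E[trace(A_N^{2k+1})]| ≤ C_k · N^{−1/2}. -/
/-!
Expanding the trace, `E tr A_N^(2k+1)` is a sum over closed walks `f : Fin (2k+1) → Fin N` of
`E ∏_j b_(ℓ j)` with labels `ℓ j = palLabel N (f j) (f (j+1))`. By independence this expectation
factors over the distinct labels into moments of `p`: it vanishes as soon as some label occurs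
exactly once, and is bounded by a constant otherwise. A walk is determined by its start, its labels
and, at each step, which of at most four vertices a step of the given label leads to. If every
label is repeated there are at most `k` distinct labels, so only `O(N^(k+1))` walks contribute,
while the normalisation is `N^(k+3/2)`.
-/

open MeasureTheory ProbabilityTheory Filter Finset Matrix

noncomputable section

/-- Diagonal label of the entry `(i,j)` of an `N × N` real symmetric palindromic
Toeplitz matrix: `min (|i-j|, N-1-|i-j|)`. -/
def palLabel (N : ℕ) (i j : Fin N) : ℕ :=
  min (max i.val j.val - min i.val j.val) (N - 1 - (max i.val j.val - min i.val j.val))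

/-- The `N × N` real symmetric palindromic Toeplitz matrix built from `b 0, b 1, ...`. -/
def palToep (N : ℕ) (b : ℕ → ℝ) : Matrix (Fin N) (Fin N) ℝ :=
  Matrix.of fun i j => b (palLabel N i j)

namespace Matrix

variable {n R : Type*} [Fintype n] [DecidableEq n] [CommSemiring R]

theorem pow_succ_apply_eq_sum_prod (A : Matrix n n R) (m : ℕ) (x y : n) :
    (A ^ (m + 1)) x y = ∑ g : Fin m → n, ∏ j : Fin (m + 1),
      A ((Fin.cons x g : Fin (m + 1) → n) j) ((Fin.snoc g y : Fin (m + 1) → n) j) := by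
  induction m generalizing x with
  | zero => simp [Fin.snoc]
  | succ m ih =>
    rw [pow_succ', mul_apply, ← (Fin.consEquiv fun _ => n).sum_comp, Fintype.sum_prod_type]
    refine sum_congr rfl fun z _ => ?_
    simp [Fin.consEquiv, ih, mul_sum, Fin.prod_univ_succ, ← Fin.cons_snoc_eq_snoc_cons]

theorem trace_pow_succ_eq_sum_prod (A : Matrix n n R) (m : ℕ) :
    (A ^ (m + 1)).trace = ∑ f : Fin (m + 1) → n, ∏ j, A (f j) (f (j + 1)) := by
  have cons_add_one (x : n) (g : Fin m → n) (j : Fin (m + 1)) :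
      (Fin.cons x g : Fin (m + 1) → n) (j + 1) = (Fin.snoc g x : Fin (m + 1) → n) j := by
    induction j using Fin.lastCases with
    | last => simp
    | cast i => rw [Fin.coeSucc_eq_succ]; simp
  rw [← (Fin.consEquiv fun _ => n).sum_comp, Fintype.sum_prod_type]
  simp [Fin.consEquiv, trace, pow_succ_apply_eq_sum_prod, cons_add_one]

end Matrix

section Moments

variable {Ω ι κ : Type*} [MeasurableSpace Ω] {μ : Measure Ω}

theorem ProbabilityTheory.iIndepFun.integrable_fun_finsetProd {X : κ → Ω → ℝ}
    (hX : iIndepFun X μ) (hint : ∀ i, Integrable (X i) μ) (s : Finset κ) :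
    Integrable (fun ω => ∏ i ∈ s, X i ω) μ := by
  classical
  have := hX.isProbabilityMeasure
  induction s using Finset.induction_on with
  | empty => simp
  | insert a s ha ih =>
    have hindep := hX.indepFun_finsetProd_of_notMem₀ (fun i => (hint i).aemeasurable) ha
    convert hindep.integrable_mul (by simpa only [prod_fn] using ih) (hint a) using 1
    ext ω
    simp [prod_insert ha, mul_comm]

variable [Fintype ι] [DecidableEq κ] {b : κ → Ω → ℝ} {X : Ω → ℝ}

theorem integral_prod_comp_eq_prod_moments (hindep : iIndepFun b μ)
    (hident : ∀ i, IdentDistrib (b i) X μ μ) (ℓ : ι → κ) :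
    ∫ ω, ∏ j, b (ℓ j) ω ∂μ = ∏ a ∈ univ.image ℓ, ∫ ω, X ω ^ #{j | ℓ j = a} ∂μ := by
  set s := univ.image ℓ
  have hsub : iIndepFun (fun a : s => b a) μ := hindep.precomp Subtype.val_injective
  have hfiber (ω : Ω) : ∏ j, b (ℓ j) ω = ∏ a : s, b a ω ^ #{j | ℓ j = a} :=
    (prod_comp (fun a => b a ω) ℓ).trans (prod_coe_sort s _).symm
  simp_rw [hfiber]
  rw [hsub.integral_fun_prod_comp (f := fun (a : s) (x : ℝ) => x ^ #{j | ℓ j = a})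
    (fun a => (hident a).aemeasurable_fst) (fun a => (continuous_pow _).aestronglyMeasurable)]
  refine (Fintype.prod_congr _ _ fun a => ?_).trans (prod_coe_sort s _)
  exact ((hident a).comp (measurable_id.pow_const _)).integral_eq

theorem integrable_prod_comp (hindep : iIndepFun b μ) (hident : ∀ i, IdentDistrib (b i) X μ μ)
    (hmom : ∀ c : ℕ, Integrable (fun ω => X ω ^ c) μ) (ℓ : ι → κ) :
    Integrable (fun ω => ∏ j, b (ℓ j) ω) μ := by
  have hfiber (ω : Ω) := prod_comp (s := univ) (fun a => b a ω) ℓ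
  simp_rw [hfiber]
  refine (hindep.comp (fun a x => x ^ #{j | ℓ j = a}) fun a => measurable_id.pow_const _)
    |>.integrable_fun_finsetProd (fun a => ?_) (univ.image ℓ)
  exact ((hident a).comp (measurable_id.pow_const _)).integrable_iff.mpr (hmom _)

theorem integral_prod_comp_eq_zero_of_card_fiber_eq_one (hindep : iIndepFun b μ)
    (hident : ∀ i, IdentDistrib (b i) X μ μ) (hmean : ∫ ω, X ω ∂μ = 0) {ℓ : ι → κ} {i : ι}
    (hi : #{j | ℓ j = ℓ i} = 1) :
    ∫ ω, ∏ j, b (ℓ j) ω ∂μ = 0 := by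
  rw [integral_prod_comp_eq_prod_moments hindep hident]
  exact prod_eq_zero (mem_image_of_mem ℓ (mem_univ i)) (by simpa [hi] using hmean)

theorem abs_integral_prod_comp_le (hindep : iIndepFun b μ)
    (hident : ∀ i, IdentDistrib (b i) X μ μ) {M : ℝ} (hM1 : 1 ≤ M)
    (hM : ∀ c ≤ Fintype.card ι, |∫ ω, X ω ^ c ∂μ| ≤ M) (ℓ : ι → κ) :
    |∫ ω, ∏ j, b (ℓ j) ω ∂μ| ≤ M ^ Fintype.card ι := by
  rw [integral_prod_comp_eq_prod_moments hindep hident, abs_prod]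
  calc _ ≤ ∏ _a ∈ univ.image ℓ, M :=
        prod_le_prod (fun _ _ => abs_nonneg _) fun a _ => hM _ (card_filter_le _ _)
    _ = M ^ #(univ.image ℓ) := prod_const M
    _ ≤ M ^ Fintype.card ι := pow_le_pow_right₀ hM1 card_image_le

theorem abs_integral_sum_prod_comp_le {W : Type*} [Fintype W] (hindep : iIndepFun b μ)
    (hident : ∀ i, IdentDistrib (b i) X μ μ) (hmean : ∫ ω, X ω ∂μ = 0)
    (hmom : ∀ c : ℕ, Integrable (fun ω => X ω ^ c) μ) {M : ℝ} (hM1 : 1 ≤ M)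
    (hM : ∀ c ≤ Fintype.card ι, |∫ ω, X ω ^ c ∂μ| ≤ M) (ℓ : W → ι → κ) :
    |∫ ω, ∑ w, ∏ j, b (ℓ w j) ω ∂μ| ≤
      #{w | ∀ j, 2 ≤ #{j' | ℓ w j' = ℓ w j}} * M ^ Fintype.card ι := by
  rw [integral_finsetSum _ fun w _ => integrable_prod_comp hindep hident hmom (ℓ w),
    ← sum_filter_of_ne (p := fun w => ∀ j, 2 ≤ #{j' | ℓ w j' = ℓ w j})]
  · calc _ ≤ ∑ w ∈ {w | ∀ j, 2 ≤ #{j' | ℓ w j' = ℓ w j}}, |∫ ω, ∏ j, b (ℓ w j) ω ∂μ| :=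
          abs_sum_le_sum_abs _ _
      _ ≤ _ := by
          simpa using sum_le_sum fun w _ => abs_integral_prod_comp_le hindep hident hM1 hM (ℓ w)
  · intro w _ hw j
    by_contra! hj
    have hpos : 0 < #{j' | ℓ w j' = ℓ w j} := card_pos.mpr ⟨j, by simp⟩
    exact hw <| integral_prod_comp_eq_zero_of_card_fiber_eq_one hindep hident hmean (i := j)
      (by omega)

end Moments

theorem Fin.eq_of_zero_eq_of_step_eq {α β : Type*} {m : ℕ} {e : α → α → β}
    (he : ∀ x, Function.Injective (e x)) {f g : Fin (m + 1) → α} (h0 : f 0 = g 0)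
    (h : ∀ j, e (f j) (f (j + 1)) = e (g j) (g (j + 1))) : f = g := by
  funext i
  induction i using Fin.induction with
  | zero => exact h0
  | succ i ih =>
    have step := h i.castSucc
    rw [Fin.coeSucc_eq_succ, ih] at step
    exact he _ step

theorem card_filter_card_image_le {ι α : Type*} [Fintype ι] [DecidableEq ι] [Fintype α]
    [DecidableEq α] [Nonempty α] (k : ℕ) :
    #{ℓ : ι → α | #(univ.image ℓ) ≤ k} ≤ k ^ Fintype.card ι * Fintype.card α ^ k := by
  calc _ ≤ #(univ : Finset ((ι → Fin k) × (Fin k → α))) := by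
        refine card_le_card_of_surjOn (fun p => p.2 ∘ p.1) fun ℓ hℓ => ?_
        simp only [coe_filter, mem_univ, true_and] at hℓ
        set e := (univ.image ℓ).equivFin
        refine ⟨(fun j => Fin.castLE hℓ (e ⟨ℓ j, mem_image_of_mem ℓ (mem_univ j)⟩),
          fun i => if h : i.val < #(univ.image ℓ) then e.symm ⟨i, h⟩ else Classical.arbitrary α),
          by simp, ?_⟩
        funext j
        simp
    _ = _ := by simp

theorem palLabel_lt {N : ℕ} (x y : Fin N) : palLabel N x y < N := by
  unfold palLabel
  omega

def palWalkLabel (N : ℕ) {m : ℕ} (f : Fin (m + 1) → Fin N) (j : Fin (m + 1)) : Fin N :=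
  ⟨palLabel N (f j) (f (j + 1)), palLabel_lt _ _⟩

/-- From `x`, a step of label `l` leads to one of `x ± l`, `x ± (N - 1 - l)`; the code records
which one. -/
def palStepCode {N : ℕ} (x y : Fin N) : Bool × Bool :=
  (decide (x ≤ y), decide (palLabel N x y = max x.val y.val - min x.val y.val))

theorem palLabel_palStepCode_injective {N : ℕ} (x : Fin N) :
    Function.Injective fun y => (palLabel N x y, palStepCode x y) := by
  intro y z h
  simp only [palStepCode, Prod.mk.injEq, decide_eq_decide, Fin.le_def] at h
  unfold palLabel at h
  have := y.isLt; have := z.isLt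
  ext
  omega

theorem card_palWalk_repeated_labels_le (N k : ℕ) :
    #{f : Fin (2 * k + 1) → Fin N |
        ∀ j, 2 ≤ #{j' | palWalkLabel N f j' = palWalkLabel N f j}} ≤
      N ^ (k + 1) * (k ^ (2 * k + 1) * 4 ^ (2 * k + 1)) := by
  rcases N.eq_zero_or_pos with rfl | hN
  · simp
  have : Nonempty (Fin N) := ⟨⟨0, hN⟩⟩
  set S : Finset (Fin (2 * k + 1) → Fin N) :=
    {f | ∀ j, 2 ≤ #{j' | palWalkLabel N f j' = palWalkLabel N f j}}
  set L : Finset (Fin (2 * k + 1) → Fin N) := {ℓ | #(univ.image ℓ) ≤ k}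
  set T : Finset (Fin N × (Fin (2 * k + 1) → Fin N) × (Fin (2 * k + 1) → Bool × Bool)) :=
    univ ×ˢ L ×ˢ univ
  let encode (f : Fin (2 * k + 1) → Fin N) :=
    (f 0, palWalkLabel N f, fun j => palStepCode (f j) (f (j + 1)))
  have hmaps : Set.MapsTo encode S T := by
    intro f hf
    simp only [S, mem_coe, mem_filter, mem_univ, true_and] at hf
    have := mul_card_image_le_card univ 2 (f := palWalkLabel N f) (by
      simp only [mem_image, mem_univ, true_and]
      rintro _ ⟨j, rfl⟩
      exact hf j)
    simp only [T, L, encode, mem_coe, mem_product, mem_filter, mem_univ, true_and, and_true,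
      card_univ, Fintype.card_fin] at this ⊢
    omega
  have hinj : Set.InjOn encode S := by
    intro f _ g _ h
    simp only [encode, Prod.mk.injEq, funext_iff] at h
    refine Fin.eq_of_zero_eq_of_step_eq palLabel_palStepCode_injective h.1 fun j => ?_
    simp only [Prod.mk.injEq]
    exact ⟨congrArg Fin.val (h.2.1 j), h.2.2 j⟩
  calc #S ≤ #T := card_le_card_of_injOn encode hmaps hinj
    _ ≤ N * ((k ^ (2 * k + 1) * N ^ k) * 4 ^ (2 * k + 1)) := by
        simp only [T, card_product, card_univ, Fintype.card_fin, Fintype.card_fun,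
          Fintype.card_prod, Fintype.card_bool]
        gcongr
        simpa using card_filter_card_image_le (ι := Fin (2 * k + 1)) (α := Fin N) k
    _ = _ := by ring

theorem abs_one_div_rpow_mul_le {x C I : ℝ} (hx : 0 < x) (k : ℕ) (hI : |I| ≤ C * x ^ (k + 1)) :
    |1 / x ^ ((2 * (k : ℝ) + 1) / 2 + 1) * I| ≤ C * x ^ (-(1 / 2) : ℝ) := by
  have hpow : x ^ (k + 1) / x ^ ((2 * (k : ℝ) + 1) / 2 + 1) = x ^ (-(1 / 2) : ℝ) := by
    rw [← Real.rpow_natCast, ← Real.rpow_sub hx]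
    congr 1
    push_cast
    ring
  have hpos : 0 < x ^ ((2 * (k : ℝ) + 1) / 2 + 1) := by positivity
  rw [abs_mul, abs_of_pos (one_div_pos.mpr hpos), ← hpow, mul_div_assoc', one_div_mul_eq_div]
  exact div_le_div_of_nonneg_right hI hpos.le

theorem palindromicToeplitz_odd_moments_bound_general
    {Ω : Type} [MeasureSpace Ω]
    (b : ℕ → Ω → ℝ)
    (hindep : iIndepFun b volume)
    (hident : ∀ i, IdentDistrib (b i) (b 0) volume volume)
    (hmean : ∫ ω, b 0 ω = 0)
    (hmom : ∀ k : ℕ, Integrable (fun ω => (b 0 ω) ^ k))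
    (k : ℕ) :
    ∃ C : ℝ, ∀ n : ℕ,
      |(1 / ((2 * n + 2 : ℕ) : ℝ) ^ ((2 * (k : ℝ) + 1) / 2 + 1)) *
          ∫ ω, (palToep (2 * n + 2) (fun m => b m ω) ^ (2 * k + 1)).trace|
        ≤ C * ((2 * n + 2 : ℕ) : ℝ) ^ (-(1 / 2) : ℝ) := by
  obtain ⟨M₀, hM₀⟩ := ((Set.finite_Iic (2 * k + 1)).image fun c => |∫ ω, b 0 ω ^ c|).bddAbove
  set M := max 1 M₀
  have hM1 : 1 ≤ M := le_max_left _ _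
  have hM (c : ℕ) (hc : c ≤ 2 * k + 1) : |∫ ω, b 0 ω ^ c| ≤ M :=
    le_max_of_le_right (hM₀ ⟨c, hc, rfl⟩)
  refine ⟨(k ^ (2 * k + 1) * 4 ^ (2 * k + 1) : ℕ) * M ^ (2 * k + 1), fun n => ?_⟩
  set N := 2 * n + 2
  have htrace (ω : Ω) : (palToep N (fun m => b m ω) ^ (2 * k + 1)).trace =
      ∑ f : Fin (2 * k + 1) → Fin N, ∏ j, b (palWalkLabel N f j) ω :=
    trace_pow_succ_eq_sum_prod _ _
  have hexp : |∫ ω, (palToep N (fun m => b m ω) ^ (2 * k + 1)).trace| ≤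
      ((k ^ (2 * k + 1) * 4 ^ (2 * k + 1) : ℕ) * M ^ (2 * k + 1)) * (N : ℝ) ^ (k + 1) := by
    simp_rw [htrace]
    refine (abs_integral_sum_prod_comp_le (b := fun i : Fin N => b i)
      (hindep.precomp Fin.val_injective) (fun i => hident i) hmean hmom hM1
      (by simpa only [Fintype.card_fin] using hM) (palWalkLabel N)).trans ?_
    rw [Fintype.card_fin]
    calc _ ≤ ((N ^ (k + 1) * (k ^ (2 * k + 1) * 4 ^ (2 * k + 1)) : ℕ) : ℝ) * M ^ (2 * k + 1) :=
          -- `convert` reconciles two `Decidable` instances of `∀ j : Fin _, _`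
          mul_le_mul_of_nonneg_right
            (Nat.cast_le.mpr (by convert card_palWalk_repeated_labels_le N k))
            (pow_nonneg (zero_le_one.trans hM1) _)
      _ = _ := by push_cast; ring
  exact abs_one_div_rpow_mul_le (by positivity) k hexp

/-- Quantitative vanishing of odd moments: for each `k` there is a constant `C_k`
(depending only on `k` and the moments of the entry distribution) such that for every
even `N ≥ 2`, `|N^{-((2k+1)/2+1)} E[trace (A_N^{2k+1})]| ≤ C_k N^{-1/2}`. -/
theorem palindromicToeplitz_odd_moments_bound
    {Ω : Type} [MeasureSpace Ω]
    (hprob : IsProbabilityMeasure (volume : Measure Ω))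
    (b : ℕ → Ω → ℝ)
    (hmeas : ∀ i, Measurable (b i))
    (hindep : iIndepFun b volume)
    (hident : ∀ i, IdentDistrib (b i) (b 0) volume volume)
    (hmean : ∫ ω, b 0 ω = 0)
    (hvar : ∫ ω, (b 0 ω) ^ 2 = 1)
    (hmom : ∀ k : ℕ, Integrable (fun ω => (b 0 ω) ^ k))
    (k : ℕ) :
    ∃ C : ℝ, ∀ n : ℕ,
      |(1 / ((2 * n + 2 : ℕ) : ℝ) ^ ((2 * (k : ℝ) + 1) / 2 + 1)) *
          ∫ ω, (palToep (2 * n + 2) (fun m => b m ω) ^ (2 * k + 1)).trace|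
        ≤ C * ((2 * n + 2 : ℕ) : ℝ) ^ (-(1 / 2) : ℝ) :=
  palindromicToeplitz_odd_moments_bound_general b hindep hident hmean hmom k

end
end

section
/- Fix an integer k ≥ 1, a partition M of {1, …, 2k} into k unordered pairs (a perfect matching), and a sign assignment attaching to each pair of M a sign in {+1, −1} such that at least one pair receives the sign +1. Then there exists a constant C_k, depending only on k, such that for every integer N ≥ 2 the number of tuples (i_1, …, i_{2k}) ∈ {1, …, N}^{2k} (with the convention i_{2k+1} = i_1) satisfying, for every pair {m, n} ∈ M with assigned sign ε, the relation i_{m+1} − i_m = ε·(i_{n+1} − i_n) + C for some C ∈ {0, N−1, −(N−1)}, is at most C_k · N^k. Hence matchings involving a plus sign contribute O_k(1/N) to the average 2k-th moment and vanish in the limit. -/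
open Finset
open scoped Classical

noncomputable section

/-- Cyclic successor on `Fin n` (`m ↦ m + 1 mod n`). -/
def cyc {n : ℕ} (m : Fin n) : Fin n := ⟨(m.val + 1) % n, Nat.mod_lt _ m.pos⟩

/-- Matchings with a plus sign are negligible: fix `k ≥ 1`, a perfect matching of
`{1,…,2k}` (encoded as a fixed-point-free involution `σ`) and a sign assignment `ε`
constant on pairs with at least one pair having sign `+1`.  Then the number of tuples
`(i_1,…,i_{2k}) ∈ {1,…,N}^{2k}` (cyclically, `i_{2k+1} = i_1`) satisfying, for every
pair `{m, σ m}`, `i_{m+1} - i_m = ε m (i_{σm+1} - i_{σm}) + C` for some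
`C ∈ {0, N-1, -(N-1)}`, is at most `C_k N^k`. -/
theorem matchings_with_plus_sign_negligible
    (k : ℕ) (hk : 1 ≤ k)
    (σ : Equiv.Perm (Fin (2 * k)))
    (hinv : ∀ m, σ (σ m) = m) (hnfix : ∀ m, σ m ≠ m)
    (ε : Fin (2 * k) → ℤ)
    (hε : ∀ m, ε m = 1 ∨ ε m = -1)
    (hεσ : ∀ m, ε (σ m) = ε m)
    (hplus : ∃ m, ε m = 1) :
    ∃ C : ℝ, ∀ N : ℕ, 2 ≤ N →
      ((Finset.univ.filter (fun i : Fin (2 * k) → Fin N =>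
          ∀ m : Fin (2 * k), ∃ c : ℤ,
            (c = 0 ∨ c = (N : ℤ) - 1 ∨ c = -((N : ℤ) - 1)) ∧
              ((i (cyc m)).val : ℤ) - ((i m).val : ℤ)
                = ε m * (((i (cyc (σ m))).val : ℤ) - ((i (σ m)).val : ℤ)) + c)).card : ℝ)
        ≤ C * (N : ℝ) ^ k := by
  classical
  have hn : 0 < 2 * k := by omega
  have hεsq : ∀ m, ε m * ε m = 1 := fun m => by rcases hε m with h | h <;> rw [h] <;> ring
  obtain ⟨m₀', hm₀'⟩ := hplus
  set r₀ : Fin (2 * k) := if m₀' < σ m₀' then m₀' else σ m₀' with hr₀def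
  have hr₀lt : r₀ < σ r₀ := by
    rcases lt_trichotomy m₀' (σ m₀') with h | h | h
    · simpa [hr₀def, h] using h
    · exact absurd h.symm (hnfix m₀')
    · have hne : ¬ m₀' < σ m₀' := not_lt.mpr h.le
      simp only [hr₀def, if_neg hne, hinv]
      exact h
  have hεr₀ : ε r₀ = 1 := by
    by_cases h : m₀' < σ m₀' <;> simp [hr₀def, h, hεσ, hm₀']
  set R : Finset (Fin (2 * k)) := Finset.univ.filter (fun m => m < σ m) with hRdef
  have hmemR : ∀ m, m ∈ R ↔ m < σ m := by intro m; simp [hRdef]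
  have hr₀R : r₀ ∈ R := (hmemR r₀).mpr hr₀lt
  have hdisj : Disjoint R (R.image σ) := by
    rw [Finset.disjoint_left]
    intro a haR haI
    obtain ⟨b, hbR, hba⟩ := Finset.mem_image.mp haI
    have h1 := (hmemR a).mp haR
    have h2 := (hmemR b).mp hbR
    rw [hba] at h2
    rw [← hba] at h1
    rw [hinv] at h1
    rw [hba] at h1
    exact absurd (h1.trans h2) (lt_irrefl _)
  have hcover : ∀ m : Fin (2 * k), m ∈ R ∨ m ∈ R.image σ := by
    intro m
    rcases lt_trichotomy m (σ m) with h | h | h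
    · exact Or.inl ((hmemR m).mpr h)
    · exact absurd h.symm (hnfix m)
    · refine Or.inr (Finset.mem_image.mpr ⟨σ m, (hmemR _).mpr ?_, hinv m⟩)
      rw [hinv]; exact h
  have hunion : R ∪ R.image σ = Finset.univ := by
    apply Finset.eq_univ_of_forall
    intro m
    rcases hcover m with h | h
    · exact Finset.mem_union_left _ h
    · exact Finset.mem_union_right _ h
  have hcardR : R.card = k := by
    have h1 : (R ∪ R.image σ).card = R.card + (R.image σ).card :=
      Finset.card_union_of_disjoint hdisj
    have h2 : (R.image σ).card = R.card := Finset.card_image_of_injective _ σ.injective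
    have h3 : (Finset.univ : Finset (Fin (2 * k))).card = 2 * k := by simp
    rw [hunion, h3, h2] at h1
    omega
  set S : Finset (Fin (2 * k)) := R.erase r₀ with hSdef
  have hcardS : S.card = k - 1 := by rw [hSdef, Finset.card_erase_of_mem hr₀R, hcardR]
  refine ⟨3 ^ (3 * k), ?_⟩
  intro N hN
  have hNpos : 0 < N := by omega
  set A : Finset (Fin (2 * k) → Fin N) := Finset.univ.filter (fun i : Fin (2 * k) → Fin N =>
          ∀ m : Fin (2 * k), ∃ c : ℤ,
            (c = 0 ∨ c = (N : ℤ) - 1 ∨ c = -((N : ℤ) - 1)) ∧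
              ((i (cyc m)).val : ℤ) - ((i m).val : ℤ)
                = ε m * (((i (cyc (σ m))).val : ℤ) - ((i (σ m)).val : ℤ)) + c) with hAdef
  set di : (Fin (2 * k) → Fin N) → Fin (2 * k) → ℤ :=
    fun i m => ((i (cyc m)).val : ℤ) - ((i m).val : ℤ) with hdidef
  set ci : (Fin (2 * k) → Fin N) → Fin (2 * k) → ℤ :=
    fun i m => di i m - ε m * di i (σ m) with hcidef
  have hmemA : ∀ i ∈ A, ∀ m,
      (ci i m = 0 ∨ ci i m = (N : ℤ) - 1 ∨ ci i m = -((N : ℤ) - 1)) := by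
    intro i hi m
    rw [hAdef, Finset.mem_filter] at hi
    obtain ⟨c, hc, heq⟩ := hi.2 m
    have hcm : ci i m = c := by simp only [hcidef, hdidef]; linarith
    rw [hcm]; exact hc
  have hdibd : ∀ (i : Fin (2 * k) → Fin N) m, di i m ∈ Finset.Icc (-(N : ℤ)) N := by
    intro i m
    have h1 := (i (cyc m)).isLt
    have h2 := (i m).isLt
    simp only [hdidef, Finset.mem_Icc]
    omega
  haveI : NeZero (2 * k) := ⟨by omega⟩
  have hcyc1 : ∀ m : Fin (2 * k), cyc m = m + 1 := by
    intro m
    ext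
    simp [cyc, Fin.add_def, Fin.val_one', Nat.add_mod_mod]
  have hsum : ∀ i : Fin (2 * k) → Fin N, ∑ m, di i m = 0 := by
    intro i
    simp only [hdidef, hcyc1, Finset.sum_sub_distrib]
    rw [Fintype.sum_equiv (Equiv.addRight (1 : Fin (2 * k)))
      (fun m => ((i (m + 1)).val : ℤ)) (fun m => ((i m).val : ℤ)) (fun m => rfl)]
    ring
  have hpairsum : ∀ i : Fin (2 * k) → Fin N, ∑ r ∈ R, (di i r + di i (σ r)) = 0 := by
    intro i
    have h1 : ∑ m, di i m = ∑ m ∈ R ∪ R.image σ, di i m := by rw [hunion]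
    rw [Finset.sum_union hdisj,
      Finset.sum_image (fun a _ b _ h => σ.injective h)] at h1
    rw [hsum i] at h1
    rw [Finset.sum_add_distrib]
    linarith
  have hsplit : ∀ i : Fin (2 * k) → Fin N,
      (di i r₀ + di i (σ r₀)) + ∑ s ∈ S, (di i s + di i (σ s)) = 0 := by
    intro i
    have h := hpairsum i
    rw [← Finset.insert_erase hr₀R, Finset.sum_insert (Finset.notMem_erase _ _)] at h
    rw [hSdef]
    linarith
  have hform : ∀ (j : Fin (2 * k) → Fin N) m, di j (σ m) = ε m * (di j m - ci j m) := by
    intro j m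
    have h := hεsq m
    simp only [hcidef]
    linear_combination (-(di j (σ m))) * h
  set z0 : Fin (2 * k) := ⟨0, hn⟩ with hz0def
  set Φ : (Fin (2 * k) → Fin N) → Fin N × (Fin (2 * k) → ℤ) × (Fin (2 * k) → ℤ) :=
    fun i => (i z0, ci i, fun s => if s ∈ S then di i s else 0) with hΦdef
  set T : Finset (Fin N × (Fin (2 * k) → ℤ) × (Fin (2 * k) → ℤ)) :=
    (Finset.univ : Finset (Fin N)) ×ˢ
      (Fintype.piFinset fun _ : Fin (2 * k) =>
        ({0, (N : ℤ) - 1, -((N : ℤ) - 1)} : Finset ℤ)) ×ˢ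
      (Fintype.piFinset fun s : Fin (2 * k) =>
        if s ∈ S then Finset.Icc (-(N : ℤ)) (N : ℤ) else ({0} : Finset ℤ)) with hTdef
  have hmaps : ∀ i ∈ A, Φ i ∈ T := by
    intro i hi
    simp only [hTdef, hΦdef, Finset.mem_product, Fintype.mem_piFinset]
    refine ⟨Finset.mem_univ _, ?_, ?_⟩
    · intro m
      rcases hmemA i hi m with h | h | h <;> simp [h]
    · intro s
      by_cases hs : s ∈ S
      · simp only [if_pos hs]
        exact hdibd i s
      · simp [hs]
  have hinj : Set.InjOn Φ A := by
    intro i hi i' hi' hΦeq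
    simp only [hΦdef, Prod.mk.injEq] at hΦeq
    obtain ⟨h0, hc, hd⟩ := hΦeq
    have hcfun : ∀ m, ci i m = ci i' m := fun m => congrFun hc m
    have hdS : ∀ s ∈ S, di i s = di i' s := by
      intro s hs
      have := congrFun hd s
      simpa [hs] using this
    have hdσS : ∀ s ∈ S, di i (σ s) = di i' (σ s) := by
      intro s hs
      rw [hform, hform, hdS s hs, hcfun]
    have hr : di i r₀ = di i (σ r₀) + ci i r₀ := by
      simp only [hcidef, hεr₀]; ring
    have hr' : di i' r₀ = di i' (σ r₀) + ci i' r₀ := by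
      simp only [hcidef, hεr₀]; ring
    have hSsum : ∑ s ∈ S, (di i s + di i (σ s)) = ∑ s ∈ S, (di i' s + di i' (σ s)) :=
      Finset.sum_congr rfl (fun s hs => by rw [hdS s hs, hdσS s hs])
    have h1 := hsplit i
    have h2 := hsplit i'
    have hdσr₀ : di i (σ r₀) = di i' (σ r₀) := by
      rw [hr] at h1
      rw [hr'] at h2
      have hcr := hcfun r₀
      linarith
    have hdr₀ : di i r₀ = di i' r₀ := by
      rw [hr, hr', hdσr₀, hcfun]
    have hdall : ∀ m, di i m = di i' m := by
      intro m
      rcases hcover m with hm | hm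
      · rcases eq_or_ne m r₀ with rfl | hne
        · exact hdr₀
        · exact hdS m (by rw [hSdef]; exact Finset.mem_erase.mpr ⟨hne, hm⟩)
      · obtain ⟨r, hrR, rfl⟩ := Finset.mem_image.mp hm
        rcases eq_or_ne r r₀ with rfl | hne
        · exact hdσr₀
        · exact hdσS r (by rw [hSdef]; exact Finset.mem_erase.mpr ⟨hne, hrR⟩)
    have hval : ∀ t, ∀ ht : t < 2 * k, i ⟨t, ht⟩ = i' ⟨t, ht⟩ := by
      intro t
      induction t with
      | zero => intro ht; exact h0
      | succ t ih =>
        intro ht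
        have ht' : t < 2 * k := by omega
        have hcycm : cyc (⟨t, ht'⟩ : Fin (2 * k)) = ⟨t + 1, ht⟩ := by
          ext
          simp [cyc, Nat.mod_eq_of_lt ht]
        have h1 := hdall ⟨t, ht'⟩
        simp only [hdidef, hcycm] at h1
        have h2 := ih ht'
        have h3 : ((i ⟨t + 1, ht⟩).val : ℤ) = ((i' ⟨t + 1, ht⟩).val : ℤ) := by
          rw [h2] at h1
          linarith
        exact Fin.val_injective (by exact_mod_cast h3)
    funext m
    have := hval m.val m.isLt
    simpa using this
  have hcard : A.card ≤ T.card := Finset.card_le_card_of_injOn Φ hmaps hinj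
  have h3card : ({0, (N : ℤ) - 1, -((N : ℤ) - 1)} : Finset ℤ).card = 3 := by
    rw [Finset.card_insert_of_notMem, Finset.card_insert_of_notMem,
      Finset.card_singleton]
    · simp only [Finset.mem_singleton]
      omega
    · simp only [Finset.mem_insert, Finset.mem_singleton]
      push_neg
      constructor <;> omega
  have hIcc : (Finset.Icc (-(N : ℤ)) (N : ℤ)).card = 2 * N + 1 := by
    rw [Int.card_Icc]
    omega
  have hTcard : T.card = N * (3 ^ (2 * k) * (2 * N + 1) ^ (k - 1)) := by
    simp only [hTdef, Finset.card_product, Fintype.card_piFinset]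
    congr 1
    · simp
    congr 1
    · rw [Finset.prod_congr rfl (fun s _ => h3card), Finset.prod_const]
      simp
    · have heach : ∀ s : Fin (2 * k),
          (if s ∈ S then Finset.Icc (-(N : ℤ)) (N : ℤ) else ({0} : Finset ℤ)).card
            = if s ∈ S then 2 * N + 1 else 1 := by
        intro s
        split <;> simp [hIcc]
      rw [Finset.prod_congr rfl (fun s _ => heach s), Finset.prod_ite,
        Finset.prod_const, Finset.prod_const, one_pow, mul_one]
      congr 1
      rw [Finset.filter_mem_eq_inter, Finset.univ_inter, hcardS]
  have hfin : A.card ≤ 3 ^ (3 * k) * N ^ k := by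
    calc A.card ≤ T.card := hcard
      _ = N * (3 ^ (2 * k) * (2 * N + 1) ^ (k - 1)) := hTcard
      _ ≤ N * (3 ^ (2 * k) * (3 * N) ^ (k - 1)) := by
          apply Nat.mul_le_mul_left
          apply Nat.mul_le_mul_left
          apply Nat.pow_le_pow_left
          omega
      _ = (3 ^ (2 * k) * 3 ^ (k - 1)) * (N ^ 1 * N ^ (k - 1)) := by
          rw [mul_pow]; ring
      _ = 3 ^ (2 * k + (k - 1)) * N ^ (1 + (k - 1)) := by rw [pow_add, pow_add]
      _ ≤ 3 ^ (3 * k) * N ^ k := by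
          have h2 : 1 + (k - 1) = k := by omega
          rw [h2]
          exact Nat.mul_le_mul_right _
            (Nat.pow_le_pow_right (by omega) (by omega))
  calc (A.card : ℝ) ≤ ((3 ^ (3 * k) * N ^ k : ℕ) : ℝ) := by exact_mod_cast hfin
    _ = 3 ^ (3 * k) * (N : ℝ) ^ k := by push_cast; ring

end
end

section
/- Fix an integer k ≥ 1 and a partition M of {1, …, 2k} into k unordered pairs (a perfect matching). For N ≥ 2 let T_N(M) be the number of tuples (i_1, …, i_{2k}) ∈ {1, …, N}^{2k} (with the convention i_{2k+1} = i_1) such that for every pair {m, n} ∈ M there exists C ∈ {0, N−1, −(N−1)} with i_{m+1} − i_m = −(i_{n+1} − i_n) + C. Then there is a constant C_k, depending only on k, with |T_N(M) − N^{k+1}| ≤ C_k · N^k for all N. Consequently each of the (2k−1)!! perfect matchings contributes exactly 1 to the limiting 2k-th spectral moment, so M_{2k} = (2k−1)!!, the 2k-th moment of the standard Gaussian density. -/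
open Finset
open scoped Classical

noncomputable section

/-!
Write `N = q + 1`. Reducing a tuple modulo `q = N - 1` kills the three admissible constants, so
the cyclic differences `δ` of the residue tuple satisfy `δ m + δ (σ m) = 0` in `ZMod q`. A residue
tuple is determined by one entry and its cyclic differences, and the differences may be any
`σ`-antisymmetric family (such a family sums to zero around the cycle); hence the congruence
system has exactly `q ^ (k + 1)` solutions. A solution with no zero entry lifts uniquely to
entries in `{1, …, q - 1}`, where `|δ m + δ (σ m)| < 2 q` forces the sum to be `0` or `±q`, so it
comes from exactly one tuple of `T_N`. The solutions with a zero entry number at most `2 k q ^ k`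
and have at most `2 ^ (2 k)` preimages each, so `T_N = q ^ (k + 1) + O(q ^ k)`, and
`(q + 1) ^ (k + 1) - q ^ (k + 1) = O(q ^ k)`.
-/

lemma eq_zero_or_eq_or_eq_neg_of_dvd_of_abs_lt {q s : ℤ} (h : q ∣ s) (hs : |s| < 2 * q) :
    s = 0 ∨ s = q ∨ s = -q := by
  obtain ⟨c, rfl⟩ := h
  have hq : 0 < q := by linarith [abs_nonneg (q * c)]
  rw [abs_mul, abs_of_pos hq, mul_comm] at hs
  obtain ⟨hc₁, hc₂⟩ := abs_lt.1 (lt_of_mul_lt_mul_right hs hq.le)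
  interval_cases c <;> simp

lemma add_one_pow_succ_sub_pow_succ_le {R : Type*} [CommRing R] [LinearOrder R]
    [IsStrictOrderedRing R] {x : R} (hx : 0 ≤ x) (k : ℕ) :
    (x + 1) ^ (k + 1) - x ^ (k + 1) ≤ (k + 1) * (x + 1) ^ k := by
  have h := abs_pow_sub_pow_le (x + 1) x (k + 1)
  rw [add_sub_cancel_left, abs_one, one_mul, Nat.add_sub_cancel, abs_of_nonneg hx,
    abs_of_nonneg (by linarith : (0 : R) ≤ x + 1), max_eq_left (by linarith)] at h
  push_cast at h
  exact (le_abs_self _).trans h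

section CyclicDifference

open Fin.NatCast

variable {n : ℕ} {A : Type*} [AddCommGroup A]

lemma cyc_eq_add_one [NeZero n] (m : Fin n) : cyc m = m + 1 := by
  ext
  simp [cyc, Fin.val_add]

def cycDiff (j : Fin n → A) (m : Fin n) : A := j (cyc m) - j m

lemma cycDiff_add_const (j : Fin n → A) (a : A) :
    cycDiff (fun m => j m + a) = cycDiff j := by
  funext m
  simp [cycDiff]

variable [NeZero n]

lemma apply_eq_apply_zero_add_sum_cycDiff (j : Fin n → A) (m : Fin n) :
    j m = j 0 + ∑ r ∈ range m, cycDiff j r := by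
  have telescope := sum_range_sub (fun i : ℕ => j (i : Fin n)) m
  simp only [Nat.cast_succ, Fin.cast_val_eq_self, Nat.cast_zero] at telescope
  simp only [cycDiff, cyc_eq_add_one, telescope]
  abel

lemma eq_of_cycDiff_eq {j j' : Fin n → A} (h : cycDiff j = cycDiff j') {m₀ : Fin n}
    (h₀ : j m₀ = j' m₀) : j = j' := by
  have h0 : j 0 = j' 0 := by
    have e := apply_eq_apply_zero_add_sum_cycDiff j m₀
    rw [h₀, apply_eq_apply_zero_add_sum_cycDiff j' m₀, h] at e
    exact (add_left_injective _ e).symm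
  funext m
  rw [apply_eq_apply_zero_add_sum_cycDiff j m, apply_eq_apply_zero_add_sum_cycDiff j' m, h0, h]

lemma exists_cycDiff_eq (d : Fin n → A) (hd : ∑ m, d m = 0) : ∃ j, cycDiff j = d := by
  set J : ℕ → A := fun i => ∑ r ∈ range i, d (r : Fin n)
  have hJ : Function.Periodic J n := by
    intro i
    have hcycle : ∑ r ∈ range n, d (r : Fin n) = 0 := by
      rw [← Fin.sum_univ_eq_sum_range (fun r => d (r : Fin n))]
      simpa only [Fin.cast_val_eq_self] using hd
    simp only [J, add_comm i n, sum_range_add, hcycle, Nat.cast_add, Fin.natCast_self,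
      zero_add]
  refine ⟨fun m => J m, funext fun m => ?_⟩
  have hval : ((cyc m : Fin n) : ℕ) = (m + 1) % n := rfl
  simp only [cycDiff, hval, hJ.map_mod_nat, J, sum_range_succ, Fin.cast_val_eq_self]
  abel

lemma card_filter_cycDiff_mem_of_apply_eq [Fintype A] [DecidableEq A] (D : Finset (Fin n → A))
    (hD : ∀ d ∈ D, ∑ m, d m = 0) (m₀ : Fin n) (a : A) :
    #{j | cycDiff j ∈ D ∧ j m₀ = a} = #D := by
  refine card_bij (fun j _ => cycDiff j) (fun j hj => (mem_filter.1 hj).2.1) ?_ ?_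
  · intro j hj j' hj' h
    exact eq_of_cycDiff_eq h ((mem_filter.1 hj).2.2.trans (mem_filter.1 hj').2.2.symm)
  · intro d hd
    obtain ⟨j, rfl⟩ := exists_cycDiff_eq d (hD d hd)
    exact ⟨fun m => j m + (a - j m₀), by simp [cycDiff_add_const, hd], cycDiff_add_const j _⟩

lemma card_filter_cycDiff_mem [Fintype A] [DecidableEq A] (D : Finset (Fin n → A))
    (hD : ∀ d ∈ D, ∑ m, d m = 0) :
    #{j | cycDiff j ∈ D} = Fintype.card A * #D := by
  rw [card_eq_sum_card_fiberwise (f := fun j => j 0) (t := univ)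
    fun _ _ => mem_coe.2 (mem_univ _)]
  simp only [filter_filter, card_filter_cycDiff_mem_of_apply_eq D hD, sum_const, card_univ,
    smul_eq_mul]

end CyclicDifference

section FixedPointFreeInvolution

variable {ι : Type*} [LinearOrder ι] {σ : Equiv.Perm ι}

lemma not_lt_apply_iff (hfix : ∀ m, σ m ≠ m) (m : ι) : ¬m < σ m ↔ σ m < m :=
  not_lt.trans (hfix m).le_iff_lt

variable [Fintype ι]

lemma two_mul_card_filter_lt_apply (hσ : Function.Involutive σ) (hfix : ∀ m, σ m ≠ m) :
    2 * #{m | m < σ m} = Fintype.card ι := by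
  have hswap : #{m | σ m < m} = #{m | m < σ m} :=
    card_equiv σ fun m => by simp [hσ m]
  rw [← card_univ, ← card_filter_add_card_filter_not (s := univ) fun m => m < σ m]
  simp only [not_lt_apply_iff hfix, hswap]
  ring

lemma sum_eq_zero_of_add_apply_eq_zero {M : Type*} [AddCommMonoid M]
    (hσ : Function.Involutive σ) (hfix : ∀ m, σ m ≠ m) (d : ι → M)
    (hd : ∀ m, d m + d (σ m) = 0) : ∑ m, d m = 0 :=
  calc ∑ m, d m = ∑ m with m < σ m, d m + ∑ m with σ m < m, d m := by
        rw [← sum_filter_add_sum_filter_not univ fun m => m < σ m]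
        simp only [not_lt_apply_iff hfix]
    _ = ∑ m with m < σ m, d m + ∑ m with m < σ m, d (σ m) := by
        congr 1
        exact sum_equiv σ (fun m => by simp [hσ m]) fun m _ => by rw [hσ m]
    _ = 0 := by
        rw [← sum_add_distrib]
        exact sum_eq_zero fun m _ => hd m

variable (σ) in
def pairAntisymm (A : Type*) [AddCommGroup A] [Fintype A] : Finset (ι → A) :=
  {d | ∀ m, d m + d (σ m) = 0}

lemma sum_eq_zero_of_mem_pairAntisymm {A : Type*} [AddCommGroup A] [Fintype A]
    (hσ : Function.Involutive σ) (hfix : ∀ m, σ m ≠ m) {d : ι → A}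
    (hd : d ∈ pairAntisymm σ A) :
    ∑ m, d m = 0 :=
  sum_eq_zero_of_add_apply_eq_zero hσ hfix d (mem_filter.1 hd).2

lemma card_pairAntisymm {A : Type*} [AddCommGroup A] [Fintype A] (hσ : Function.Involutive σ)
    (hfix : ∀ m, σ m ≠ m) :
    #(pairAntisymm σ A) = Fintype.card A ^ #{m | m < σ m} := by
  set R := ({m | m < σ m} : Finset ι)
  have hR {m : ι} : m ∈ R ↔ m < σ m := by simp [R]
  have hσR {m : ι} (h : ¬m < σ m) : σ m ∈ R := by
    rw [hR, hσ m]
    exact (not_lt_apply_iff hfix m).1 h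
  have antisymm {d : ι → A} (hd : d ∈ pairAntisymm σ A) (m : ι) : d m = -d (σ m) :=
    eq_neg_of_add_eq_zero_left ((mem_filter.1 hd).2 m)
  rw [← Fintype.card_coe R, ← Fintype.card_fun, ← card_univ]
  refine card_bij (fun d _ r => d r) (fun _ _ => mem_univ _) ?_ ?_
  · intro d hd d' hd' h
    funext m
    by_cases hm : m < σ m
    · exact congrFun h ⟨m, hR.2 hm⟩
    · rw [antisymm hd, antisymm hd', congrFun h ⟨σ m, hσR hm⟩]
  · intro x _
    -- extend `x` by zero off `R`, then antisymmetrize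
    set y : ι → A := fun m => if h : m ∈ R then x ⟨m, h⟩ else 0
    refine ⟨fun m => y m - y (σ m), ?_, funext fun r => ?_⟩
    · simp only [pairAntisymm, mem_filter, mem_univ, true_and, hσ _]
      exact fun m => by abel
    · have hr : σ r ∉ R := by rw [hR, hσ r, not_lt]; exact (hR.1 r.2).le
      simp [y, hr]

end FixedPointFreeInvolution

section ReductionMod

variable {q : ℕ}

lemma val_natCast_of_le_of_ne_zero {a : ℕ} (ha : a ≤ q) (h : (a : ZMod q) ≠ 0) :
    (a : ZMod q).val = a := by
  refine ZMod.val_natCast_of_lt (lt_of_le_of_ne ha ?_)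
  rintro rfl
  exact h (ZMod.natCast_self a)

lemma card_filter_natCast_val_eq_le_two [NeZero q] (v : ZMod q) :
    #{a : Fin (q + 1) | ((a : ℕ) : ZMod q) = v} ≤ 2 := by
  have hq : 0 < q := Nat.pos_of_neZero q
  -- `a` is recovered from its residue and from `a / q ∈ {0, 1}`
  refine (card_le_card_of_injOn (t := range 2) (fun a : Fin (q + 1) => (a : ℕ) / q) ?_ ?_)
    |>.trans_eq (card_range 2)
  · intro a _
    simp only [coe_range, Set.mem_Iio, Nat.div_lt_iff_lt_mul hq]
    omega
  · intro a ha b hb h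
    simp only [coe_filter, mem_univ, true_and, Set.mem_ofPred_eq] at ha hb
    have hmod : (a : ℕ) % q = (b : ℕ) % q := by
      rw [← ZMod.val_natCast, ← ZMod.val_natCast, ha, hb]
    ext
    rw [← Nat.mod_add_div a q, ← Nat.mod_add_div b q, hmod]
    simp only at h
    rw [h]

variable (q) in
def reduceMod {ι : Type*} (i : ι → Fin (q + 1)) (m : ι) : ZMod q := ((i m : ℕ) : ZMod q)

variable {ι : Type*}

lemma reduceMod_injOn :
    Set.InjOn (reduceMod q) {i : ι → Fin (q + 1) | ∀ m, reduceMod q i m ≠ 0} := by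
  intro i hi i' hi' h
  funext m
  have e := val_natCast_of_le_of_ne_zero (Nat.lt_succ_iff.1 (i m).isLt) (hi m)
  have e' := val_natCast_of_le_of_ne_zero (Nat.lt_succ_iff.1 (i' m).isLt) (hi' m)
  exact Fin.ext (e.symm.trans ((congrArg ZMod.val (congrFun h m)).trans e'))

variable [Fintype ι] [DecidableEq ι]

lemma card_filter_reduceMod_eq_le [NeZero q] (j : ι → ZMod q) :
    #{i | reduceMod q i = j} ≤ 2 ^ Fintype.card ι := by
  have hfiber : ({i | reduceMod q i = j} : Finset (ι → Fin (q + 1))) =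
      Fintype.piFinset fun m => {a : Fin (q + 1) | ((a : ℕ) : ZMod q) = j m} := by
    ext i
    simp [reduceMod, funext_iff]
  rw [hfiber, Fintype.card_piFinset, ← card_univ]
  exact prod_le_pow_card _ _ _ fun m _ => card_filter_natCast_val_eq_le_two (j m)

end ReductionMod

section PairedTuples

variable {n : ℕ} {σ : Equiv.Perm (Fin n)} {q : ℕ}

-- The set `T_N(M)`, with the entries shifted from `{1, …, N}` to `Fin N`.
variable (σ) in
def pairedTuples (N : ℕ) : Finset (Fin n → Fin N) :=
  univ.filter fun i => ∀ m : Fin n, ∃ c : ℤ,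
    (c = 0 ∨ c = (N : ℤ) - 1 ∨ c = -((N : ℤ) - 1)) ∧
      ((i (cyc m)).val : ℤ) - ((i m).val : ℤ)
        = -(((i (cyc (σ m))).val : ℤ) - ((i (σ m)).val : ℤ)) + c

variable (σ q) in
def pairedResidues [NeZero q] : Finset (Fin n → ZMod q) :=
  {j | cycDiff j ∈ pairAntisymm σ (ZMod q)}

lemma mem_pairedResidues [NeZero q] {j : Fin n → ZMod q} :
    j ∈ pairedResidues σ q ↔ ∀ m, cycDiff j m + cycDiff j (σ m) = 0 := by
  simp [pairedResidues, pairAntisymm]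

lemma reduceMod_mem_pairedResidues [NeZero q] {i : Fin n → Fin (q + 1)}
    (hi : i ∈ pairedTuples σ (q + 1)) : reduceMod q i ∈ pairedResidues σ q := by
  refine mem_pairedResidues.2 fun m => ?_
  obtain ⟨c, hc, h⟩ := (mem_filter.1 hi).2 m
  have hc0 : (c : ZMod q) = 0 := by
    push_cast at hc
    rcases hc with rfl | rfl | rfl <;> simp
  have h' := congrArg (Int.cast : ℤ → ZMod q) h
  push_cast at h'
  simp only [cycDiff, reduceMod]
  linear_combination h' + hc0

lemma exists_mem_pairedTuples_reduceMod_eq [NeZero q] {j : Fin n → ZMod q}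
    (hj : j ∈ pairedResidues σ q) (h0 : ∀ m, j m ≠ 0) :
    ∃ i ∈ pairedTuples σ (q + 1), reduceMod q i = j := by
  have hval (m : Fin n) : 1 ≤ (j m).val ∧ (j m).val < q :=
    ⟨Nat.one_le_iff_ne_zero.2 ((ZMod.val_ne_zero _).2 (h0 m)), ZMod.val_lt _⟩
  refine ⟨fun m => ⟨(j m).val, Nat.lt_succ_of_lt (ZMod.val_lt _)⟩, ?_,
    funext fun m => ZMod.natCast_zmod_val (j m)⟩
  simp only [pairedTuples, mem_filter, mem_univ, true_and]
  intro m
  set s : ℤ := (j (cyc m)).val - (j m).val + ((j (cyc (σ m))).val - (j (σ m)).val)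
  have hdvd : (q : ℤ) ∣ s := by
    rw [← ZMod.intCast_zmod_eq_zero_iff_dvd]
    push_cast [s, ZMod.natCast_zmod_val]
    exact mem_pairedResidues.1 hj m
  have hs : |s| < 2 * q := by
    have := hval m; have := hval (cyc m); have := hval (σ m); have := hval (cyc (σ m))
    rw [abs_lt]
    constructor <;> omega
  refine ⟨s, ?_, by simp only [s]; ring⟩
  push_cast
  simpa using eq_zero_or_eq_or_eq_neg_of_dvd_of_abs_lt hdvd hs

end PairedTuples

section Counting

variable {n : ℕ} [NeZero n] {σ : Equiv.Perm (Fin n)} {q : ℕ} [NeZero q]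

lemma card_pairedResidues (hσ : Function.Involutive σ) (hfix : ∀ m, σ m ≠ m) :
    #(pairedResidues σ q) = q ^ (#{m | m < σ m} + 1) := by
  rw [pairedResidues, card_filter_cycDiff_mem (pairAntisymm σ (ZMod q)) fun _ =>
      sum_eq_zero_of_mem_pairAntisymm hσ hfix,
    card_pairAntisymm hσ hfix, ZMod.card, pow_succ']

lemma card_filter_pairedResidues_apply_eq_zero (hσ : Function.Involutive σ)
    (hfix : ∀ m, σ m ≠ m) (m₀ : Fin n) :
    #{j ∈ pairedResidues σ q | j m₀ = 0} = q ^ #{m | m < σ m} := by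
  rw [pairedResidues, filter_filter, card_filter_cycDiff_mem_of_apply_eq
    (pairAntisymm σ (ZMod q)) (fun _ => sum_eq_zero_of_mem_pairAntisymm hσ hfix),
    card_pairAntisymm hσ hfix, ZMod.card]

lemma card_filter_pairedResidues_exists_eq_zero_le (hσ : Function.Involutive σ)
    (hfix : ∀ m, σ m ≠ m) :
    #{j ∈ pairedResidues σ q | ∃ m, j m = 0} ≤ n * q ^ #{m | m < σ m} := by
  calc _ ≤ #(univ.biUnion fun m => {j ∈ pairedResidues σ q | j m = 0}) :=
        card_le_card fun j hj => by simpa using hj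
    _ ≤ #(univ : Finset (Fin n)) * q ^ #{m | m < σ m} := card_biUnion_le_card_mul _ _ _
        fun m _ => (card_filter_pairedResidues_apply_eq_zero hσ hfix m).le
    _ = n * q ^ #{m | m < σ m} := by rw [card_univ, Fintype.card_fin]

lemma card_pairedTuples_le (hσ : Function.Involutive σ) (hfix : ∀ m, σ m ≠ m) :
    #(pairedTuples σ (q + 1)) ≤
      q ^ (#{m | m < σ m} + 1) + 2 ^ n * (n * q ^ #{m | m < σ m}) := by
  rw [← card_filter_add_card_filter_not (s := pairedTuples σ (q + 1))
    fun i => ∀ m, reduceMod q i m ≠ 0]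
  gcongr ?_ + ?_
  · rw [← card_pairedResidues hσ hfix]
    exact card_le_card_of_injOn (reduceMod q)
      (fun i hi => reduceMod_mem_pairedResidues (mem_filter.1 hi).1)
      (reduceMod_injOn.mono fun i hi => (mem_filter.1 hi).2)
  · refine (card_le_mul_card_image (f := reduceMod q) _ (2 ^ n) fun j _ => ?_).trans ?_
    · refine (card_le_card (filter_subset_filter _ (subset_univ _))).trans ?_
      simpa using card_filter_reduceMod_eq_le (q := q) j
    · gcongr
      refine (card_le_card fun j hj => ?_).trans
        (card_filter_pairedResidues_exists_eq_zero_le hσ hfix)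
      obtain ⟨i, hi, rfl⟩ := mem_image.1 hj
      obtain ⟨hiT, hi0⟩ := mem_filter.1 hi
      exact mem_filter.2 ⟨reduceMod_mem_pairedResidues hiT, not_forall_not.1 hi0⟩

lemma le_card_pairedTuples_add (hσ : Function.Involutive σ) (hfix : ∀ m, σ m ≠ m) :
    q ^ (#{m | m < σ m} + 1) ≤ #(pairedTuples σ (q + 1)) + n * q ^ #{m | m < σ m} := by
  rw [← card_pairedResidues hσ hfix, ← card_filter_add_card_filter_not
    (s := pairedResidues σ q) fun j => ∃ m, j m = 0, add_comm]
  gcongr ?_ + ?_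
  · refine (card_le_card fun j hj => ?_).trans (card_image_le (f := reduceMod q))
    obtain ⟨hj, hj0⟩ := mem_filter.1 hj
    obtain ⟨i, hi, rfl⟩ := exists_mem_pairedTuples_reduceMod_eq hj (not_exists.1 hj0)
    exact mem_image_of_mem _ hi
  · exact card_filter_pairedResidues_exists_eq_zero_le hσ hfix

end Counting

lemma abs_sub_add_one_pow_le {T x K : ℝ} {k : ℕ} (hx : 0 ≤ x) (hK : 1 ≤ K)
    (hupper : T ≤ x ^ (k + 1) + K * (2 * k * x ^ k))
    (hlower : x ^ (k + 1) ≤ T + 2 * k * x ^ k) :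
    |T - (x + 1) ^ (k + 1)| ≤ (k + 1 + K * (2 * k)) * (x + 1) ^ k := by
  have hgap := add_one_pow_succ_sub_pow_succ_le hx k
  have hx' : x ^ (k + 1) ≤ (x + 1) ^ (k + 1) := by gcongr; linarith
  have hxk : 2 * k * x ^ k ≤ 2 * k * (x + 1) ^ k := by gcongr; linarith
  have hK' : 2 * k * (x + 1) ^ k ≤ K * (2 * k * (x + 1) ^ k) :=
    le_mul_of_one_le_left (by positivity) hK
  have hKxk : K * (2 * k * x ^ k) ≤ K * (2 * k * (x + 1) ^ k) := by gcongr
  have hpos : 0 ≤ (k + 1) * (x + 1) ^ k := by positivity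
  rw [abs_le]
  constructor <;> linarith

/-- Each matching (with all minus signs) contributes fully: fix `k ≥ 1` and a perfect
matching of `{1,…,2k}` (encoded as a fixed-point-free involution `σ`).  Let `T_N` be
the number of tuples `(i_1,…,i_{2k}) ∈ {1,…,N}^{2k}` (cyclically, `i_{2k+1} = i_1`)
such that for every pair `{m, σ m}` there is `C ∈ {0, N-1, -(N-1)}` with
`i_{m+1} - i_m = -(i_{σm+1} - i_{σm}) + C`.  Then `|T_N - N^{k+1}| ≤ C_k N^k`; hence
each of the `(2k-1)!!` matchings contributes exactly `1` to the limiting `2k`-th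
spectral moment, so `M_{2k} = (2k-1)!!`. -/
theorem matching_contributes_one
    (k : ℕ) (hk : 1 ≤ k)
    (σ : Equiv.Perm (Fin (2 * k)))
    (hinv : ∀ m, σ (σ m) = m) (hnfix : ∀ m, σ m ≠ m) :
    ∃ C : ℝ, ∀ N : ℕ, 2 ≤ N →
      |(((Finset.univ.filter (fun i : Fin (2 * k) → Fin N =>
            ∀ m : Fin (2 * k), ∃ c : ℤ,
              (c = 0 ∨ c = (N : ℤ) - 1 ∨ c = -((N : ℤ) - 1)) ∧
                ((i (cyc m)).val : ℤ) - ((i m).val : ℤ)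
                  = -(((i (cyc (σ m))).val : ℤ) - ((i (σ m)).val : ℤ)) + c)).card : ℝ)
          - (N : ℝ) ^ (k + 1))|
        ≤ C * (N : ℝ) ^ k := by
  have : NeZero (2 * k) := ⟨by omega⟩
  have hpairs : #{m | m < σ m} = k := by
    have := two_mul_card_filter_lt_apply hinv hnfix
    rw [Fintype.card_fin] at this
    omega
  refine ⟨k + 1 + 2 ^ (2 * k) * (2 * k), fun N hN => ?_⟩
  obtain ⟨q, rfl⟩ : ∃ q, N = q + 1 := ⟨N - 1, by omega⟩
  have : NeZero q := ⟨by omega⟩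
  have hupper := card_pairedTuples_le (q := q) hinv hnfix
  have hlower := le_card_pairedTuples_add (q := q) hinv hnfix
  rw [hpairs] at hupper hlower
  change |(#(pairedTuples σ (q + 1)) : ℝ) - _| ≤ _
  push_cast
  exact abs_sub_add_one_pow_le (Nat.cast_nonneg q) (one_le_pow₀ one_le_two)
    (by exact_mod_cast hupper) (by exact_mod_cast hlower)

end
end

section
/- (Cauchy's interlacing property.) Let N ≥ 2, let A be an N×N real symmetric matrix, and let B be the top-left (N−1)×(N−1) principal submatrix of A. If λ_1 ≤ λ_2 ≤ ⋯ ≤ λ_N are the eigenvalues of A and λ'_1 ≤ λ'_2 ≤ ⋯ ≤ λ'_{N−1} are the eigenvalues of B, each listed with multiplicity, then λ_i ≤ λ'_i ≤ λ_{i+1} for every 1 ≤ i ≤ N−1. -/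
/-!
Courant–Fischer style dimension count. Let `u` and `v` be orthonormal eigenbases of `A` and of
its compression `B`, ordered along the sorted eigenvalues, and view `ℝⁿ ⊆ ℝⁿ⁺¹` by appending a
zero coordinate, so that `⟪A y, y⟫ = ⟪B y, y⟫` there. The spans of `u_i, …, u_n` (dimension
`n + 1 - i`) and of `v_0, …, v_i` (dimension `i + 1`) meet in a nonzero `y`, on which
`μ_i ‖y‖² ≤ ⟪A y, y⟫ = ⟪B y, y⟫ ≤ μ'_i ‖y‖²`. The spans of `u_0, …, u_{i+1}` and `v_i, …, v_{n-1}`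
give `μ'_i ≤ μ_{i+1}` in the same way.
-/

open Matrix Submodule Finset Module

noncomputable section

section Rayleigh

variable {ι E : Type*} [Fintype ι] [NormedAddCommGroup E] [InnerProductSpace ℝ E]
  (b : OrthonormalBasis ι ℝ E) {T : E →ₗ[ℝ] E} {ν : ι → ℝ}

theorem OrthonormalBasis.repr_eq_zero_of_mem_span_image {s : Set ι} {x : E}
    (hx : x ∈ span ℝ (b '' s)) {j : ι} (hj : j ∉ s) : b.repr x j = 0 := by
  rw [← b.coe_toBasis, b.toBasis.mem_span_image] at hx
  simpa [OrthonormalBasis.coe_toBasis_repr_apply] using fun h => hj (hx h)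

theorem OrthonormalBasis.repr_apply_of_apply_eq_smul (hT : ∀ j, T (b j) = ν j • b j) (x : E)
    (j : ι) : b.repr (T x) j = ν j * b.repr x j := by
  classical
  conv_lhs => rw [← b.sum_repr x]
  simp [hT, smul_smul, b.repr_self, Pi.single_apply, mul_comm]

theorem OrthonormalBasis.inner_apply_self_eq_sum (hT : ∀ j, T (b j) = ν j • b j) (x : E) :
    inner ℝ (T x) x = ∑ j, ν j * b.repr x j ^ 2 := by
  rw [← b.repr.inner_map_map, PiLp.inner_apply]
  simp [b.repr_apply_of_apply_eq_smul hT, sq, mul_left_comm]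

theorem OrthonormalBasis.norm_sq_eq_sum (x : E) : ‖x‖ ^ 2 = ∑ j, b.repr x j ^ 2 := by
  rw [← b.repr.norm_map, EuclideanSpace.real_norm_sq_eq]

theorem OrthonormalBasis.le_inner_apply_self_of_mem_span (hT : ∀ j, T (b j) = ν j • b j)
    {s : Set ι} {a : ℝ} (hs : ∀ j ∈ s, a ≤ ν j) {x : E} (hx : x ∈ span ℝ (b '' s)) :
    a * ‖x‖ ^ 2 ≤ inner ℝ (T x) x := by
  rw [b.inner_apply_self_eq_sum hT, b.norm_sq_eq_sum, Finset.mul_sum]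
  refine Finset.sum_le_sum fun j _ => ?_
  by_cases hj : j ∈ s
  · exact mul_le_mul_of_nonneg_right (hs j hj) (sq_nonneg _)
  · simp [b.repr_eq_zero_of_mem_span_image hx hj]

theorem OrthonormalBasis.inner_apply_self_le_of_mem_span (hT : ∀ j, T (b j) = ν j • b j)
    {s : Set ι} {a : ℝ} (hs : ∀ j ∈ s, ν j ≤ a) {x : E} (hx : x ∈ span ℝ (b '' s)) :
    inner ℝ (T x) x ≤ a * ‖x‖ ^ 2 := by
  rw [b.inner_apply_self_eq_sum hT, b.norm_sq_eq_sum, Finset.mul_sum]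
  refine Finset.sum_le_sum fun j _ => ?_
  by_cases hj : j ∈ s
  · exact mul_le_mul_of_nonneg_right (hs j hj) (sq_nonneg _)
  · simp [b.repr_eq_zero_of_mem_span_image hx hj]

end Rayleigh

theorem LinearIndependent.finrank_span_image {ι M : Type*} [AddCommGroup M] [Module ℝ M]
    {v : ι → M} (hv : LinearIndependent ℝ v) (s : Finset ι) :
    finrank ℝ (span ℝ (v '' s)) = #s := by
  rw [Set.image_eq_range]
  exact (finrank_span_eq_card (hv.comp _ Subtype.val_injective)).trans (by simp)

section Compression

variable {ι κ E F : Type*} [Fintype ι] [Fintype κ]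
  [NormedAddCommGroup E] [InnerProductSpace ℝ E] [NormedAddCommGroup F] [InnerProductSpace ℝ F]
  {s : Finset ι} {t : Finset κ}

theorem exists_ne_zero_map_mem_span_image_of_finrank_lt (J : F →ₗᵢ[ℝ] E)
    (b : OrthonormalBasis ι ℝ E) (c : OrthonormalBasis κ ℝ F) (hst : finrank ℝ E < #s + #t) :
    ∃ y ≠ 0, J y ∈ span ℝ (b '' s) ∧ y ∈ span ℝ (c '' t) := by
  have : FiniteDimensional ℝ E := .of_basis b.toBasis
  have hdim : finrank ℝ (span ℝ (b '' s)) + finrank ℝ ((span ℝ (c '' t)).map J.toLinearMap)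
      = #s + #t := by
    rw [map_span, ← Set.image_comp, LinearIsometry.coe_toLinearMap,
      b.orthonormal.linearIndependent.finrank_span_image,
      (c.orthonormal.comp_linearIsometry J).linearIndependent.finrank_span_image]
  have hmeet : ¬Disjoint (span ℝ (b '' s)) ((span ℝ (c '' t)).map J.toLinearMap) :=
    fun h => (finrank_add_finrank_le_of_disjoint h).not_gt (hdim ▸ hst)
  simp only [Submodule.disjoint_def, not_forall] at hmeet
  obtain ⟨_, hxs, ⟨y, hyt, rfl⟩, hx⟩ := hmeet
  exact ⟨y, by rintro rfl; simp at hx, hxs, hyt⟩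

variable {T : E →ₗ[ℝ] E} {S : F →ₗ[ℝ] F} {J : F →ₗᵢ[ℝ] E}
  {b : OrthonormalBasis ι ℝ E} {c : OrthonormalBasis κ ℝ F} {ν : ι → ℝ} {ν' : κ → ℝ} {a a' : ℝ}

theorem le_of_compression_of_finrank_lt (hJ : ∀ y, inner ℝ (T (J y)) (J y) = inner ℝ (S y) y)
    (hT : ∀ j, T (b j) = ν j • b j) (hS : ∀ k, S (c k) = ν' k • c k)
    (hst : finrank ℝ E < #s + #t) (hs : ∀ j ∈ s, a ≤ ν j) (ht : ∀ k ∈ t, ν' k ≤ a') :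
    a ≤ a' := by
  obtain ⟨y, hy, hyb, hyc⟩ := exists_ne_zero_map_mem_span_image_of_finrank_lt J b c hst
  have hpos : 0 < ‖y‖ ^ 2 := by positivity
  refine le_of_mul_le_mul_right ?_ hpos
  calc a * ‖y‖ ^ 2 = a * ‖J y‖ ^ 2 := by rw [J.norm_map]
    _ ≤ inner ℝ (T (J y)) (J y) := b.le_inner_apply_self_of_mem_span hT hs hyb
    _ = inner ℝ (S y) y := hJ y
    _ ≤ a' * ‖y‖ ^ 2 := c.inner_apply_self_le_of_mem_span hS ht hyc

theorem le_of_compression_of_finrank_lt' (hJ : ∀ y, inner ℝ (T (J y)) (J y) = inner ℝ (S y) y)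
    (hT : ∀ j, T (b j) = ν j • b j) (hS : ∀ k, S (c k) = ν' k • c k)
    (hst : finrank ℝ E < #s + #t) (hs : ∀ j ∈ s, ν j ≤ a) (ht : ∀ k ∈ t, a' ≤ ν' k) :
    a' ≤ a := by
  obtain ⟨y, hy, hyb, hyc⟩ := exists_ne_zero_map_mem_span_image_of_finrank_lt J b c hst
  have hpos : 0 < ‖y‖ ^ 2 := by positivity
  refine le_of_mul_le_mul_right ?_ hpos
  calc a' * ‖y‖ ^ 2 ≤ inner ℝ (S y) y := c.le_inner_apply_self_of_mem_span hS ht hyc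
    _ = inner ℝ (T (J y)) (J y) := (hJ y).symm
    _ ≤ a * ‖J y‖ ^ 2 := b.inner_apply_self_le_of_mem_span hT hs hyb
    _ = a * ‖y‖ ^ 2 := by rw [J.norm_map]

end Compression

namespace EuclideanSpace

variable (𝕜 : Type*) [RCLike 𝕜] (n : ℕ)

def snocZero : EuclideanSpace 𝕜 (Fin n) →ₗᵢ[𝕜] EuclideanSpace 𝕜 (Fin (n + 1)) where
  toFun y := WithLp.toLp 2 (Fin.snoc (y : Fin n → 𝕜) 0)
  map_add' y z := by
    ext j
    refine Fin.lastCases ?_ (fun k => ?_) j <;> simp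
  map_smul' a y := by
    ext j
    refine Fin.lastCases ?_ (fun k => ?_) j <;> simp
  norm_map' y := by
    simp [EuclideanSpace.norm_eq, Fin.sum_univ_castSucc]

variable {𝕜 n}

@[simp] theorem snocZero_castSucc (y : EuclideanSpace 𝕜 (Fin n)) (k : Fin n) :
    snocZero 𝕜 n y k.castSucc = y k := by
  simp [snocZero]

@[simp] theorem snocZero_last (y : EuclideanSpace 𝕜 (Fin n)) :
    snocZero 𝕜 n y (Fin.last n) = 0 := by
  simp [snocZero]

theorem inner_toEuclideanLin_snocZero (A : Matrix (Fin (n + 1)) (Fin (n + 1)) 𝕜)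
    (y z : EuclideanSpace 𝕜 (Fin n)) :
    inner 𝕜 (toEuclideanLin A (snocZero 𝕜 n y)) (snocZero 𝕜 n z)
      = inner 𝕜 (toEuclideanLin (A.submatrix Fin.castSucc Fin.castSucc) y) z := by
  simp [PiLp.inner_apply, Fin.sum_univ_castSucc, mulVec, dotProduct]

end EuclideanSpace

theorem Matrix.IsHermitian.toEuclideanLin_eigenvectorBasis_reindex {ι : Type*} [Fintype ι]
    [DecidableEq ι] {A : Matrix ι ι ℝ} (hA : A.IsHermitian) (σ : Equiv.Perm ι) (j : ι) :
    toEuclideanLin A (hA.eigenvectorBasis.reindex σ.symm j)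
      = (hA.eigenvalues ∘ σ) j • hA.eigenvectorBasis.reindex σ.symm j := by
  ext1
  simp [hA.mulVec_eigenvectorBasis]

theorem cauchy_interlacing_general
    (n : ℕ)
    (A : Matrix (Fin (n + 1)) (Fin (n + 1)) ℝ) (hA : A.IsHermitian)
    (B : Matrix (Fin n) (Fin n) ℝ)
    (hAB : B = A.submatrix Fin.castSucc Fin.castSucc)
    (hB : B.IsHermitian)
    (μ : Fin (n + 1) → ℝ) (hμmono : Monotone μ)
    (hμ : ∃ σ : Equiv.Perm (Fin (n + 1)), μ = hA.eigenvalues ∘ σ)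
    (μ' : Fin n → ℝ) (hμ'mono : Monotone μ')
    (hμ' : ∃ τ : Equiv.Perm (Fin n), μ' = hB.eigenvalues ∘ τ) :
    ∀ i : Fin n, μ i.castSucc ≤ μ' i ∧ μ' i ≤ μ i.succ := by
  obtain ⟨σ, rfl⟩ := hμ
  obtain ⟨τ, rfl⟩ := hμ'
  subst hAB
  have hT := hA.toEuclideanLin_eigenvectorBasis_reindex σ
  have hS := hB.toEuclideanLin_eigenvectorBasis_reindex τ
  have hJ := fun y => EuclideanSpace.inner_toEuclideanLin_snocZero A y y
  intro i
  constructor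
  · refine le_of_compression_of_finrank_lt hJ hT hS (s := Ici i.castSucc) (t := Iic i) ?_
      (fun j hj => hμmono (mem_Ici.mp hj)) (fun k hk => hμ'mono (mem_Iic.mp hk))
    simp only [finrank_euclideanSpace_fin, Fin.card_Ici, Fin.card_Iic, Fin.val_castSucc]
    omega
  · refine le_of_compression_of_finrank_lt' hJ hT hS (s := Iic i.succ) (t := Ici i) ?_
      (fun j hj => hμmono (mem_Iic.mp hj)) (fun k hk => hμ'mono (mem_Ici.mp hk))
    simp only [finrank_euclideanSpace_fin, Fin.card_Iic, Fin.card_Ici, Fin.val_succ]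
    omega

/-- Cauchy's interlacing property: if `A` is an `(n+1) × (n+1)` real symmetric matrix,
`B` is its top-left `n × n` principal submatrix, `μ` (resp. `μ'`) lists the eigenvalues
of `A` (resp. `B`) with multiplicity in nondecreasing order, then
`μ i ≤ μ' i ≤ μ (i+1)` for every `i`. -/
theorem cauchy_interlacing
    (n : ℕ) (hn : 1 ≤ n)
    (A : Matrix (Fin (n + 1)) (Fin (n + 1)) ℝ) (hA : A.IsHermitian)
    (B : Matrix (Fin n) (Fin n) ℝ)
    (hAB : B = A.submatrix Fin.castSucc Fin.castSucc)
    (hB : B.IsHermitian)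
    (μ : Fin (n + 1) → ℝ) (hμmono : Monotone μ)
    (hμ : ∃ σ : Equiv.Perm (Fin (n + 1)), μ = hA.eigenvalues ∘ σ)
    (μ' : Fin n → ℝ) (hμ'mono : Monotone μ')
    (hμ' : ∃ τ : Equiv.Perm (Fin n), μ' = hB.eigenvalues ∘ τ) :
    ∀ i : Fin n, μ i.castSucc ≤ μ' i ∧ μ' i ≤ μ i.succ :=
  cauchy_interlacing_general n A hA B hAB hB μ hμmono hμ μ' hμ'mono hμ'

end
end

section
/- (Rank inequality.) Let A and B be N×N Hermitian matrices, and define their empirical spectral distributions F^A(x) = #{1 ≤ i ≤ N : λ_i(A) ≤ x}/N and F^B(x) = #{1 ≤ i ≤ N : λ_i(B) ≤ x}/N, where λ_1(·) ≤ ⋯ ≤ λ_N(·) are the eigenvalues with multiplicity. Then sup_{x∈ℝ} |F^A(x) − F^B(x)| ≤ rank(A − B)/N. -/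
/-!
If `x` is a level and `U` is spanned by the eigenvectors of `A` with eigenvalue `≤ x`, `W` by those
of `B` with eigenvalue `> x`, then on `U ∩ W ∩ ker (A - B)` the Rayleigh quotients of `A` and `B`
agree but are `≤ x` and `> x` respectively, so this intersection is zero. Counting dimensions,
`#{λᵢ(A) ≤ x} + (N - #{λᵢ(B) ≤ x}) + (N - rank (A - B)) ≤ 2N`, and by symmetry in `A` and `B`
the two counting functions differ by at most `rank (A - B)`.
-/

open Matrix Finset Module Submodule

theorem Submodule.finrank_add_finrank_le_finrank_inf_add {K V : Type*} [DivisionRing K]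
    [AddCommGroup V] [Module K V] [FiniteDimensional K V] (U W : Submodule K V) :
    finrank K U + finrank K W ≤ finrank K ↥(U ⊓ W) + finrank K V := by
  have := finrank_sup_add_finrank_inf_eq U W
  have := finrank_le (U ⊔ W)
  omega

namespace OrthonormalBasis

variable {𝕜 E ι : Type*} [RCLike 𝕜] [NormedAddCommGroup E] [InnerProductSpace 𝕜 E] [Fintype ι]
  (b : OrthonormalBasis ι 𝕜 E)

theorem finrank_span_image (s : Finset ι) : finrank 𝕜 (span 𝕜 (b '' s)) = #s := by
  rw [Set.image_eq_range, ← Fintype.card_coe]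
  exact finrank_span_eq_card (b.orthonormal.linearIndependent.comp _ Subtype.val_injective)

theorem repr_eq_zero_of_mem_span_image_s12 {s : Set ι} {v : E} (hv : v ∈ span 𝕜 (b '' s)) {i : ι}
    (hi : i ∉ s) : b.repr v i = 0 := by
  rw [← b.coe_toBasis, Basis.mem_span_image] at hv
  rw [← b.coe_toBasis_repr_apply, ← Finsupp.notMem_support_iff]
  exact fun h => hi (hv h)

variable {T : E →ₗ[𝕜] E} {μ : ι → ℝ}

theorem repr_apply_of_apply_eq_smul_s12 (hT : ∀ i, T (b i) = (μ i : 𝕜) • b i) (v : E) (i : ι) :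
    b.repr (T v) i = μ i * b.repr v i := by
  classical
  conv_lhs => rw [← b.sum_repr v]
  simp [hT, b.repr_self, Pi.single_apply, RCLike.real_smul_eq_coe_mul, mul_comm]

theorem re_inner_apply_self_of_apply_eq_smul (hT : ∀ i, T (b i) = (μ i : 𝕜) • b i) (v : E) :
    RCLike.re (inner 𝕜 v (T v)) = ∑ i, μ i * ‖b.repr v i‖ ^ 2 := by
  rw [← b.repr.inner_map_map, PiLp.inner_apply, map_sum]
  refine Finset.sum_congr rfl fun i _ => ?_
  rw [b.repr_apply_of_apply_eq_smul_s12 hT, RCLike.inner_apply, mul_assoc, RCLike.mul_conj]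
  norm_cast

theorem norm_sq_eq_sum_norm_repr_sq (v : E) : ‖v‖ ^ 2 = ∑ i, ‖b.repr v i‖ ^ 2 := by
  rw [← b.repr.norm_map, EuclideanSpace.norm_sq_eq]

variable {s : Set ι} {x : ℝ} {v : E}

theorem re_inner_apply_self_le (hT : ∀ i, T (b i) = (μ i : 𝕜) • b i) (hs : ∀ i ∈ s, μ i ≤ x)
    (hv : v ∈ span 𝕜 (b '' s)) : RCLike.re (inner 𝕜 v (T v)) ≤ x * ‖v‖ ^ 2 := by
  rw [b.re_inner_apply_self_of_apply_eq_smul hT, b.norm_sq_eq_sum_norm_repr_sq, mul_sum]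
  refine sum_le_sum fun i _ => ?_
  by_cases hi : i ∈ s
  · exact mul_le_mul_of_nonneg_right (hs i hi) (sq_nonneg _)
  · simp [b.repr_eq_zero_of_mem_span_image_s12 hv hi]

theorem lt_re_inner_apply_self (hT : ∀ i, T (b i) = (μ i : 𝕜) • b i) (hs : ∀ i ∈ s, x < μ i)
    (hv : v ∈ span 𝕜 (b '' s)) (hv₀ : v ≠ 0) : x * ‖v‖ ^ 2 < RCLike.re (inner 𝕜 v (T v)) := by
  obtain ⟨j, hj⟩ : ∃ j, b.repr v j ≠ 0 := by
    by_contra! h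
    exact hv₀ (b.repr.map_eq_zero_iff.mp (PiLp.ext h))
  have hjs : j ∈ s := by_contra fun hjs => hj (b.repr_eq_zero_of_mem_span_image_s12 hv hjs)
  rw [b.re_inner_apply_self_of_apply_eq_smul hT, b.norm_sq_eq_sum_norm_repr_sq, mul_sum]
  refine sum_lt_sum (fun i _ => ?_) ⟨j, mem_univ j, ?_⟩
  · by_cases hi : i ∈ s
    · exact mul_le_mul_of_nonneg_right (hs i hi).le (sq_nonneg _)
    · simp [b.repr_eq_zero_of_mem_span_image_s12 hv hi]
  · exact mul_lt_mul_of_pos_right (hs j hjs) (by positivity)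

end OrthonormalBasis

theorem LinearMap.card_eigenvalues_le_le_add_finrank_range_sub
    {𝕜 E ι κ : Type*} [RCLike 𝕜] [NormedAddCommGroup E] [InnerProductSpace 𝕜 E]
    [Fintype ι] [Fintype κ] {T S : E →ₗ[𝕜] E} {μ : ι → ℝ} {ν : κ → ℝ}
    (b : OrthonormalBasis ι 𝕜 E) (c : OrthonormalBasis κ 𝕜 E)
    (hT : ∀ i, T (b i) = (μ i : 𝕜) • b i) (hS : ∀ i, S (c i) = (ν i : 𝕜) • c i) (x : ℝ) :
    #{i | μ i ≤ x} ≤ #{i | ν i ≤ x} + finrank 𝕜 (LinearMap.range (T - S)) := by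
  have : FiniteDimensional 𝕜 E := .of_basis b.toBasis
  set U := span 𝕜 (b '' (({i | μ i ≤ x} : Finset ι) : Set ι))
  set W := span 𝕜 (c '' (({i | ¬ν i ≤ x} : Finset κ) : Set κ))
  have hUWK : Disjoint U (W ⊓ ker (T - S)) := by
    refine disjoint_def.mpr fun v hvU ⟨hvW, hvK⟩ => by_contra fun hv₀ => ?_
    have hTS : T v = S v := sub_eq_zero.mp hvK
    have hle := b.re_inner_apply_self_le hT (fun i hi => by simpa using hi) hvU
    have hlt := c.lt_re_inner_apply_self hS (fun i hi => not_le.mp (by simpa using hi)) hvW hv₀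
    rw [hTS] at hle
    linarith
  have hdim := finrank_add_finrank_le_of_disjoint hUWK
  have hWK := finrank_add_finrank_le_finrank_inf_add W (ker (T - S))
  have hrank := (T - S).finrank_range_add_finrank_ker
  have hsplit := card_filter_add_card_filter_not (s := univ) (fun i => ν i ≤ x)
  rw [card_univ, ← finrank_eq_card_basis c.toBasis] at hsplit
  rw [b.finrank_span_image] at hdim
  rw [c.finrank_span_image] at hWK
  omega

theorem Matrix.rank_sub_comm {m n R : Type*} [Fintype n] [CommRing R] (A B : Matrix m n R) :
    (A - B).rank = (B - A).rank := by
  rw [← neg_sub, ← neg_one_smul R (B - A),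
    rank_smul_of_mem_nonZeroDivisors _ isUnit_one.neg.mem_nonZeroDivisors]

namespace Matrix.IsHermitian

variable {𝕜 n : Type*} [RCLike 𝕜] [Fintype n] [DecidableEq n] {A B : Matrix n n 𝕜}

theorem toEuclideanLin_eigenvectorBasis (hA : A.IsHermitian) (j : n) :
    toEuclideanLin A (hA.eigenvectorBasis j) = (hA.eigenvalues j : 𝕜) • hA.eigenvectorBasis j := by
  rw [toLpLin_apply, hA.mulVec_eigenvectorBasis j, ← RCLike.real_smul_eq_coe_smul (K := 𝕜)]
  rfl

theorem card_eigenvalues_le_le_add_rank (hA : A.IsHermitian) (hB : B.IsHermitian) (x : ℝ) :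
    #{i | hA.eigenvalues i ≤ x} ≤ #{i | hB.eigenvalues i ≤ x} + (A - B).rank := by
  have hrank :
      (A - B).rank = finrank 𝕜 (LinearMap.range (toEuclideanLin A - toEuclideanLin B)) := by
    rw [← map_sub, rank_eq_finrank_range_toLin _ (PiLp.basisFun 2 𝕜 n) (PiLp.basisFun 2 𝕜 n)]
    rfl
  rw [hrank]
  exact LinearMap.card_eigenvalues_le_le_add_finrank_range_sub
    hA.eigenvectorBasis hB.eigenvectorBasis hA.toEuclideanLin_eigenvectorBasis
    hB.toEuclideanLin_eigenvectorBasis x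

end Matrix.IsHermitian

/-- The rank inequality: for `N × N` Hermitian matrices `A` and `B` with empirical
spectral distributions `F^A` and `F^B` (eigenvalues counted with multiplicity),
`sup_x |F^A(x) - F^B(x)| ≤ rank (A - B) / N`. -/
theorem rank_inequality
    (N : ℕ) (A B : Matrix (Fin N) (Fin N) ℂ)
    (hA : A.IsHermitian) (hB : B.IsHermitian) :
    ∀ x : ℝ,
      |((Finset.univ.filter (fun i : Fin N => hA.eigenvalues i ≤ x)).card : ℝ) / N -
          ((Finset.univ.filter (fun i : Fin N => hB.eigenvalues i ≤ x)).card : ℝ) / N|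
        ≤ ((A - B).rank : ℝ) / N := by
  intro x
  have hAB := hA.card_eigenvalues_le_le_add_rank hB x
  have hBA := hB.card_eigenvalues_le_le_add_rank hA x
  rw [← rank_sub_comm] at hBA
  rw [← sub_div, abs_div, Nat.abs_cast]
  gcongr
  rw [abs_sub_le_iff, sub_le_iff_le_add', sub_le_iff_le_add']
  exact ⟨mod_cast hAB, mod_cast hBA⟩
end

section
/- Let N ≥ 2 be even, let J_N be the N×N exchange matrix with (J_N)_{ij} = 1 if i + j = N + 1 and 0 otherwise, let T be an N×N real symmetric palindromic Toeplitz matrix, and set H = T·J_N (the associated real symmetric palindromic Hankel matrix). Then J_N² = I_N, H is symmetric, H·J_N = J_N·H = T, and H^{2k} = T^{2k} for every integer k ≥ 0; in particular trace(H^{2k}) = trace(T^{2k}) for all k ≥ 0. -/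
open Matrix

noncomputable section

/-- The `N × N` exchange matrix: `1` on the anti-diagonal, `0` elsewhere. -/
def exchJ (N : ℕ) : Matrix (Fin N) (Fin N) ℝ :=
  Matrix.of fun i j => if i.val + j.val = N - 1 then 1 else 0

/-- Reversal index for `Fin (2n+2)`. -/
def revIdx (n : ℕ) (i : Fin (2 * n + 2)) : Fin (2 * n + 2) :=
  ⟨2 * n + 1 - i.val, by omega⟩

lemma mul_exchJ_apply (n : ℕ) (A : Matrix (Fin (2 * n + 2)) (Fin (2 * n + 2)) ℝ)
    (i j : Fin (2 * n + 2)) : (A * exchJ (2 * n + 2)) i j = A i (revIdx n j) := by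
  rw [Matrix.mul_apply]
  rw [Finset.sum_eq_single (revIdx n j)]
  · simp [exchJ, revIdx]
    intro h; exfalso; apply h; have := j.isLt; omega
  · intro k _ hk
    simp only [exchJ, Matrix.of_apply]
    rw [if_neg, mul_zero]
    intro h; apply hk; apply Fin.ext; simp [revIdx]; omega
  · intro h; exact absurd (Finset.mem_univ _) h

lemma exchJ_mul_apply (n : ℕ) (A : Matrix (Fin (2 * n + 2)) (Fin (2 * n + 2)) ℝ)
    (i j : Fin (2 * n + 2)) : (exchJ (2 * n + 2) * A) i j = A (revIdx n i) j := by
  rw [Matrix.mul_apply]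
  rw [Finset.sum_eq_single (revIdx n i)]
  · simp [exchJ, revIdx]
    intro h; exfalso; apply h; have := i.isLt; omega
  · intro k _ hk
    simp only [exchJ, Matrix.of_apply]
    rw [if_neg, zero_mul]
    intro h; apply hk; apply Fin.ext; simp [revIdx]; omega
  · intro h; exact absurd (Finset.mem_univ _) h

lemma exchJ_sq (n : ℕ) : exchJ (2 * n + 2) * exchJ (2 * n + 2) = 1 := by
  ext i j
  rw [mul_exchJ_apply]
  have hi := i.isLt; have hj := j.isLt
  by_cases h : i = j
  · subst h; simp [exchJ, revIdx, Matrix.one_apply]; omega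
  · have : i.val ≠ j.val := fun hc => h (Fin.ext hc)
    simp [exchJ, revIdx, Matrix.one_apply, h]
    omega

lemma palLabel_rev (n : ℕ) (i j : Fin (2 * n + 2)) :
    palLabel (2 * n + 2) i (revIdx n j) = palLabel (2 * n + 2) j (revIdx n i) := by
  have hi := i.isLt; have hj := j.isLt
  simp only [palLabel, revIdx]
  omega

lemma hankel_isSymm (n : ℕ) (b : ℕ → ℝ) :
    (palToep (2 * n + 2) b * exchJ (2 * n + 2)).IsSymm := by
  rw [Matrix.IsSymm]
  ext i j
  rw [Matrix.transpose_apply, mul_exchJ_apply, mul_exchJ_apply]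
  simp only [palToep, Matrix.of_apply]
  rw [palLabel_rev]

/-- For `N = 2n+2` even, the exchange matrix `J` squares to the identity, the
associated palindromic Hankel matrix `H = T·J` is symmetric, `H·J = J·H = T`, and
`H^{2k} = T^{2k}` (hence `trace H^{2k} = trace T^{2k}`) for all `k ≥ 0`. -/
theorem palindromicHankel_toeplitz_relations
    (n : ℕ) (b : ℕ → ℝ) :
    exchJ (2 * n + 2) * exchJ (2 * n + 2) = 1 ∧
    (palToep (2 * n + 2) b * exchJ (2 * n + 2)).IsSymm ∧
    (palToep (2 * n + 2) b * exchJ (2 * n + 2)) * exchJ (2 * n + 2) = palToep (2 * n + 2) b ∧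
    exchJ (2 * n + 2) * (palToep (2 * n + 2) b * exchJ (2 * n + 2)) = palToep (2 * n + 2) b ∧
    (∀ k : ℕ,
      (palToep (2 * n + 2) b * exchJ (2 * n + 2)) ^ (2 * k) = palToep (2 * n + 2) b ^ (2 * k)) ∧
    (∀ k : ℕ,
      ((palToep (2 * n + 2) b * exchJ (2 * n + 2)) ^ (2 * k)).trace =
        (palToep (2 * n + 2) b ^ (2 * k)).trace) := by
  set T := palToep (2 * n + 2) b
  set J := exchJ (2 * n + 2)
  have hJ : J * J = 1 := exchJ_sq n
  have hsym : (T * J).IsSymm := hankel_isSymm n b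
  have hTsym : T.IsSymm := by
    rw [Matrix.IsSymm]; ext i j
    simp only [T, palToep, Matrix.transpose_apply, Matrix.of_apply, palLabel]
    congr 1; omega
  have hJsym : J.IsSymm := by
    rw [Matrix.IsSymm]; ext i j
    simp only [J, exchJ, Matrix.transpose_apply, Matrix.of_apply]
    congr 1; simp [Nat.add_comm]
  have hcomm : T * J = J * T := by
    conv_lhs => rw [← hsym]
    rw [Matrix.transpose_mul, hJsym, hTsym]
  have h1 : (T * J) * J = T := by rw [mul_assoc, hJ, mul_one]
  have h2 : J * (T * J) = T := by rw [← mul_assoc, ← hcomm, h1]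
  have hsq : (T * J) ^ 2 = T ^ 2 := by
    rw [sq, sq, mul_assoc, h2]
  have hpow : ∀ k, (T * J) ^ (2 * k) = T ^ (2 * k) := by
    intro k
    rw [pow_mul, pow_mul, hsq]
  exact ⟨hJ, hsym, h1, h2, hpow, fun k => by rw [hpow]⟩

end
end
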